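/- arXiv:1910.02007 — 3 statements merged into one kernel-verified Lean document; each statement's English description precedes it below -/
import Mathlib

section
/- Let ε ∈ (0,1), δ ∈ (0,1), Δf > 0, and σ = c·Δf/ε with c ≥ 3/2 and c² > 2 ln(1.25/δ). Setting t = σ²ε/Δf − Δf/2, the Gaussian tail satisfies P(N(0,σ²) > t) ≤ (σ/(√(2π) t)) exp(−t²/(2σ²)) < δ/2. -/
open Real MeasureTheory
open Filter Set Topology

/-!
On `(t, ∞)` with `t > 0` the Gaussian `exp (-b x²)` is dominated by `(x / t) exp (-b x²)`, which
has the elementary antiderivative `-exp (-b x²) / (2 b t)`; this is the Mills-ratio bound.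
With `σ = cΔf/ε` the threshold is `t = σ r` for `r = c - ε/(2c)`, so the bound only depends on `r`,
and `r ≥ 7/6`, `r² ≥ c² - ε > c² - 1` reduce it to the numerical facts `√(2π) > 2.5` and
`exp (1/2) < 1.65`.
-/

theorem integral_Ioi_mul_exp_neg_mul_sq {b : ℝ} (hb : 0 < b) (t : ℝ) :
    ∫ x in Ioi t, x * exp (-b * x ^ 2) = exp (-b * t ^ 2) / (2 * b) := by
  have hderiv : ∀ x ∈ Ici t,
      HasDerivAt (fun x => -exp (-b * x ^ 2) / (2 * b)) (x * exp (-b * x ^ 2)) x := by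
    intro x _
    refine (((hasDerivAt_pow 2 x).const_mul (-b)).exp.neg.div_const (2 * b)).congr_deriv ?_
    field_simp
    ring
  have hlim : Tendsto (fun x => -exp (-b * x ^ 2) / (2 * b)) atTop (𝓝 0) := by
    have hexp : Tendsto (fun x : ℝ => exp (-b * x ^ 2)) atTop (𝓝 0) := by
      refine tendsto_exp_atBot.comp ?_
      simpa only [neg_mul, Function.comp_def] using
        tendsto_neg_atTop_atBot.comp ((tendsto_pow_atTop two_ne_zero).const_mul_atTop hb)
    simpa using hexp.neg.div_const (2 * b)
  rw [integral_Ioi_of_hasDerivAt_of_tendsto' hderiv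
    (integrable_mul_exp_neg_mul_sq hb).integrableOn hlim]
  ring

theorem integral_Ioi_exp_neg_mul_sq_le {b t : ℝ} (hb : 0 < b) (ht : 0 < t) :
    ∫ x in Ioi t, exp (-b * x ^ 2) ≤ exp (-b * t ^ 2) / (2 * b * t) :=
  calc ∫ x in Ioi t, exp (-b * x ^ 2)
      ≤ ∫ x in Ioi t, x * exp (-b * x ^ 2) / t := by
        refine setIntegral_mono_on (integrable_exp_neg_mul_sq hb).integrableOn
          ((integrable_mul_exp_neg_mul_sq hb).integrableOn.div_const t) measurableSet_Ioi ?_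
        intro x hx
        rw [le_div_iff₀ ht, mul_comm]
        exact mul_le_mul_of_nonneg_right (le_of_lt hx) (exp_pos _).le
    _ = exp (-b * t ^ 2) / (2 * b * t) := by
        rw [integral_div, integral_Ioi_mul_exp_neg_mul_sq hb, div_div]

theorem integral_Ioi_gaussian_density_le {σ t : ℝ} (hσ : 0 < σ) (ht : 0 < t) :
    ∫ x in Ioi t, 1 / (√(2 * π) * σ) * exp (-x ^ 2 / (2 * σ ^ 2))
      ≤ σ / (√(2 * π) * t) * exp (-t ^ 2 / (2 * σ ^ 2)) := by
  have hb : (0 : ℝ) < 1 / (2 * σ ^ 2) := by positivity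
  have hform : ∀ x : ℝ, -x ^ 2 / (2 * σ ^ 2) = -(1 / (2 * σ ^ 2)) * x ^ 2 := fun x => by ring
  simp_rw [hform, integral_const_mul]
  calc 1 / (√(2 * π) * σ) * ∫ x in Ioi t, exp (-(1 / (2 * σ ^ 2)) * x ^ 2)
      ≤ 1 / (√(2 * π) * σ) * (exp (-(1 / (2 * σ ^ 2)) * t ^ 2) / (2 * (1 / (2 * σ ^ 2)) * t)) :=
        mul_le_mul_of_nonneg_left (integral_Ioi_exp_neg_mul_sq_le hb ht) (by positivity)
    _ = σ / (√(2 * π) * t) * exp (-(1 / (2 * σ ^ 2)) * t ^ 2) := by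
        field_simp

theorem threshold_eq_mul_sub {ε Δf c : ℝ} (hε : ε ≠ 0) (hΔ : Δf ≠ 0) (hc : c ≠ 0) :
    (c * Δf / ε) ^ 2 * ε / Δf - Δf / 2 = c * Δf / ε * (c - ε / (2 * c)) := by
  field_simp

theorem seven_sixths_le_sub_div {ε c : ℝ} (hε : ε ≤ 1) (hc : 3 / 2 ≤ c) :
    7 / 6 ≤ c - ε / (2 * c) := by
  have : ε / (2 * c) ≤ 1 / 3 := by
    rw [div_le_iff₀ (by linarith)]
    linarith
  linarith

theorem sq_sub_le_sq_sub_div (ε : ℝ) {c : ℝ} (hc : c ≠ 0) :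
    c ^ 2 - ε ≤ (c - ε / (2 * c)) ^ 2 := by
  have h : (c - ε / (2 * c)) ^ 2 = c ^ 2 - ε + (ε / (2 * c)) ^ 2 := by
    field_simp
    ring
  linarith [sq_nonneg (ε / (2 * c))]

theorem exp_half_lt : exp (1 / 2) < 1.65 := by
  rw [exp_half, sqrt_lt' (by norm_num)]
  linarith [exp_one_lt_d9]

theorem two_point_five_le_sqrt_two_pi : 2.5 ≤ √(2 * π) := by
  rw [le_sqrt (by norm_num) (by positivity)]
  linarith [pi_gt_d2]

theorem exp_neg_sq_div_two_lt {r c δ : ℝ} (hδ : 0 < δ) (hc : 2 * log (1.25 / δ) < c ^ 2)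
    (hrc : c ^ 2 - 1 ≤ r ^ 2) :
    exp (-r ^ 2 / 2) < exp (1 / 2) * (δ / 1.25) := by
  have hcδ : exp (-c ^ 2 / 2) < δ / 1.25 := by
    calc exp (-c ^ 2 / 2) < exp (-log (1.25 / δ)) := exp_lt_exp.mpr (by linarith)
      _ = δ / 1.25 := by rw [exp_neg, exp_log (by positivity), inv_div]
  calc exp (-r ^ 2 / 2) ≤ exp (1 / 2 + -c ^ 2 / 2) := exp_le_exp.mpr (by linarith)
    _ = exp (1 / 2) * exp (-c ^ 2 / 2) := exp_add _ _
    _ < exp (1 / 2) * (δ / 1.25) := mul_lt_mul_of_pos_left hcδ (exp_pos _)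

theorem mills_bound_lt {r c δ : ℝ} (hr : 7 / 6 ≤ r) (hδ : 0 < δ)
    (hc : 2 * log (1.25 / δ) < c ^ 2) (hrc : c ^ 2 - 1 ≤ r ^ 2) :
    1 / (√(2 * π) * r) * exp (-r ^ 2 / 2) < δ / 2 := by
  have hfactor : 1 / (√(2 * π) * r) ≤ 1 / (2.5 * (7 / 6)) :=
    one_div_le_one_div_of_le (by norm_num)
      (mul_le_mul two_point_five_le_sqrt_two_pi hr (by norm_num) (sqrt_nonneg _))
  calc 1 / (√(2 * π) * r) * exp (-r ^ 2 / 2)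
      ≤ 1 / (2.5 * (7 / 6)) * exp (-r ^ 2 / 2) :=
        mul_le_mul_of_nonneg_right hfactor (exp_pos _).le
    _ < 1 / (2.5 * (7 / 6)) * (1.65 * (δ / 1.25)) := by
        refine mul_lt_mul_of_pos_left ?_ (by norm_num)
        linarith [exp_neg_sq_div_two_lt hδ hc hrc,
          mul_lt_mul_of_pos_right exp_half_lt (by positivity : 0 < δ / 1.25)]
    _ ≤ δ / 2 := by ring_nf; linarith

theorem gaussian_tail_lt_half_delta_general (ε δ Δf c : ℝ) (hε : 0 < ε) (hε1 : ε < 1)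
    (hδ : 0 < δ) (hΔ : 0 < Δf) (hc : 3 / 2 ≤ c)
    (hc2 : c ^ 2 > 2 * Real.log (1.25 / δ)) :
    let σ := c * Δf / ε
    let t := σ ^ 2 * ε / Δf - Δf / 2
    (∫ x in Set.Ioi t, (1 / (Real.sqrt (2 * π) * σ)) * Real.exp (-x ^ 2 / (2 * σ ^ 2)))
        ≤ (σ / (Real.sqrt (2 * π) * t)) * Real.exp (-t ^ 2 / (2 * σ ^ 2)) ∧
      (σ / (Real.sqrt (2 * π) * t)) * Real.exp (-t ^ 2 / (2 * σ ^ 2)) < δ / 2 := by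
  intro σ t
  have hc0 : 0 < c := by linarith
  have hσ : 0 < σ := by positivity
  set r := c - ε / (2 * c)
  have ht : t = σ * r := threshold_eq_mul_sub hε.ne' hΔ.ne' hc0.ne'
  have hr : 7 / 6 ≤ r := seven_sixths_le_sub_div hε1.le hc
  have ht0 : 0 < t := ht ▸ mul_pos hσ (by linarith)
  refine ⟨integral_Ioi_gaussian_density_le hσ ht0, ?_⟩
  have hscale : σ / (√(2 * π) * t) * exp (-t ^ 2 / (2 * σ ^ 2))
      = 1 / (√(2 * π) * r) * exp (-r ^ 2 / 2) := by
    rw [ht]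
    congr 1
    · field_simp
    · congr 1
      field_simp
  rw [hscale]
  exact mills_bound_lt hr hδ hc2 (by linarith [sq_sub_le_sq_sub_div ε hc0.ne'])

/-- With `σ = cΔf/ε`, `c ≥ 3/2`, `c² > 2 ln(1.25/δ)` and `t = σ²ε/Δf − Δf/2`, the Gaussian
tail satisfies `P(N(0,σ²) > t) ≤ (σ/(√(2π) t)) exp(−t²/(2σ²)) < δ/2`. -/
theorem gaussian_tail_lt_half_delta (ε δ Δf c : ℝ) (hε : 0 < ε) (hε1 : ε < 1)
    (hδ : 0 < δ) (hδ1 : δ < 1) (hΔ : 0 < Δf) (hc : 3 / 2 ≤ c)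
    (hc2 : c ^ 2 > 2 * Real.log (1.25 / δ)) :
    let σ := c * Δf / ε
    let t := σ ^ 2 * ε / Δf - Δf / 2
    (∫ x in Set.Ioi t, (1 / (Real.sqrt (2 * π) * σ)) * Real.exp (-x ^ 2 / (2 * σ ^ 2)))
        ≤ (σ / (Real.sqrt (2 * π) * t)) * Real.exp (-t ^ 2 / (2 * σ ^ 2)) ∧
      (σ / (Real.sqrt (2 * π) * t)) * Real.exp (-t ^ 2 / (2 * σ ^ 2)) < δ / 2 :=
  gaussian_tail_lt_half_delta_general ε δ Δf c hε hε1 hδ hΔ hc hc2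
end

section
/- Tail bound from moments: if a mechanism M has log moment generating function β_M(υ) = max over neighboring d,d' of ln E[e^{υ·c}] (c the privacy loss random variable), then for any ε > 0, M is (ε, δ)-differentially private with δ = min over υ > 0 of exp(β_M(υ) − υε). -/
/-!
Split any event `O` along the bad set `B = {o | e^ε Q(o) < P(o)}`: off `B` the DP inequality
holds pointwise, so `P(O \ B) ≤ e^ε Q(O)`. On `B` the privacy loss exceeds `ε`, so Markov's
inequality applied to `e^{υ c}` bounds `P(B)` by `e^{-υε} E[e^{υ c}] = exp(β - υε)`.
-/

open scoped ENNReal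

open Real

namespace PMF

variable {Ω : Type*}

noncomputable def privacyLoss (P Q : PMF Ω) (o : Ω) : ℝ :=
  log ((P o).toReal / (Q o).toReal)

theorem toOuterMeasure_le_mul_add_toOuterMeasure_lt (P Q : PMF Ω) (c : ℝ≥0∞) (O : Set Ω) :
    P.toOuterMeasure O ≤
      c * Q.toOuterMeasure O + P.toOuterMeasure {o | c * Q o < P o} := by
  simp only [toOuterMeasure_apply, ← ENNReal.tsum_mul_left, ← ENNReal.tsum_add]
  refine ENNReal.tsum_le_tsum fun o => ?_
  by_cases hO : o ∈ O
  · by_cases hB : c * Q o < P o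
    · simp [hO, hB]
    · simp [hO, hB, not_lt.mp hB]
  · simp [hO]

theorem mul_toOuterMeasure_le_tsum_mul (P : PMF Ω) (f : Ω → ℝ≥0∞) (t : ℝ≥0∞) :
    t * P.toOuterMeasure {o | t ≤ f o} ≤ ∑' o, P o * f o := by
  rw [toOuterMeasure_apply, ← ENNReal.tsum_mul_left]
  refine ENNReal.tsum_le_tsum fun o => ?_
  by_cases h : t ≤ f o
  · rw [Set.indicator_of_mem (show o ∈ {o | t ≤ f o} from h), mul_comm]
    gcongr
  · simp [h]

theorem lt_privacyLoss_of_ofReal_exp_mul_lt {P Q : PMF Ω} {ε : ℝ} {o : Ω}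
    (habs : Q o = 0 → P o = 0) (h : ENNReal.ofReal (exp ε) * Q o < P o) :
    ε < privacyLoss P Q o := by
  have hQ : Q o ≠ 0 := fun hQ => by simp [hQ, habs hQ] at h
  have hQpos : 0 < (Q o).toReal := ENNReal.toReal_pos hQ (Q.apply_ne_top o)
  have hlt : exp ε * (Q o).toReal < (P o).toReal := by
    simpa [ENNReal.toReal_mul, (exp_pos ε).le] using
      (ENNReal.toReal_lt_toReal (ENNReal.mul_ne_top ENNReal.ofReal_ne_top (Q.apply_ne_top o))
        (P.apply_ne_top o)).2 h
  have hratio : exp ε < (P o).toReal / (Q o).toReal := (lt_div_iff₀ hQpos).2 hlt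
  exact (lt_log_iff_exp_lt ((exp_pos ε).trans hratio)).2 hratio

theorem toOuterMeasure_privacyLoss_tail_le {P Q : PMF Ω} (habs : ∀ o, Q o = 0 → P o = 0)
    {ε υ : ℝ} (hυ : 0 ≤ υ) :
    P.toOuterMeasure {o | ENNReal.ofReal (exp ε) * Q o < P o} ≤
      ENNReal.ofReal (exp (-(υ * ε))) *
        ∑' o, P o * ENNReal.ofReal (exp (υ * privacyLoss P Q o)) := by
  set t := ENNReal.ofReal (exp (υ * ε))
  have htail : {o | ENNReal.ofReal (exp ε) * Q o < P o} ⊆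
      {o | t ≤ ENNReal.ofReal (exp (υ * privacyLoss P Q o))} := fun o ho =>
    ENNReal.ofReal_le_ofReal <| exp_le_exp.2 <|
      mul_le_mul_of_nonneg_left (lt_privacyLoss_of_ofReal_exp_mul_lt (habs o) ho).le hυ
  have ht : ENNReal.ofReal (exp (-(υ * ε))) = t⁻¹ := by
    rw [exp_neg, ENNReal.ofReal_inv_of_pos (exp_pos _)]
  rw [ht, ← ENNReal.mul_le_iff_le_inv (by simp [exp_pos]) ENNReal.ofReal_ne_top]
  calc t * P.toOuterMeasure {o | ENNReal.ofReal (exp ε) * Q o < P o}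
      ≤ t * P.toOuterMeasure {o | t ≤ ENNReal.ofReal (exp (υ * privacyLoss P Q o))} := by
        gcongr
    _ ≤ _ := P.mul_toOuterMeasure_le_tsum_mul _ t

end PMF

/-- An equality for `x ≠ 0`; at `x = 0` the junk value `Real.log 0 = 0` makes the right side
`exp a`. -/
theorem ENNReal.ofReal_exp_mul_le_ofReal_exp_log_toReal_add {x : ℝ≥0∞} (hx : x ≠ ⊤) (a : ℝ) :
    ENNReal.ofReal (exp a) * x ≤ ENNReal.ofReal (exp (Real.log x.toReal + a)) := by
  rcases eq_or_ne x 0 with rfl | hx0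
  · simp
  rw [exp_add, Real.exp_log (ENNReal.toReal_pos hx0 hx), ENNReal.ofReal_mul ENNReal.toReal_nonneg,
    ENNReal.ofReal_toReal hx, mul_comm]

theorem dp_from_moments_general {Ω : Type*} (P Q : PMF Ω) (ε υ : ℝ) (hυ : 0 < υ)
    (habs : ∀ o, Q o = 0 → P o = 0)
    (E : ℝ≥0∞)
    (hE : E = ∑' o, P o *
      ENNReal.ofReal (Real.exp (υ * Real.log ((P o).toReal / (Q o).toReal))))
    (hfin : E ≠ ⊤) :
    ∀ O : Set Ω,
      P.toOuterMeasure O ≤ ENNReal.ofReal (Real.exp ε) * Q.toOuterMeasure O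
        + ENNReal.ofReal (Real.exp (Real.log E.toReal - υ * ε)) := by
  intro O
  calc P.toOuterMeasure O
      ≤ ENNReal.ofReal (exp ε) * Q.toOuterMeasure O
          + P.toOuterMeasure {o | ENNReal.ofReal (exp ε) * Q o < P o} :=
        P.toOuterMeasure_le_mul_add_toOuterMeasure_lt Q _ O
    _ ≤ ENNReal.ofReal (exp ε) * Q.toOuterMeasure O + ENNReal.ofReal (exp (-(υ * ε))) * E := by
        rw [hE]
        gcongr
        exact PMF.toOuterMeasure_privacyLoss_tail_le habs hυ.le
    _ ≤ _ := by
        rw [sub_eq_add_neg]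
        gcongr
        exact ENNReal.ofReal_exp_mul_le_ofReal_exp_log_toReal_add hfin _

/-- Tail bound from moments: if the log moment generating function of the privacy loss
of `M` at `υ > 0` is `β = ln E[e^{υ·c}]`, then `M` is `(ε, δ)`-DP with
`δ = exp(β − υε)` (hence with the minimum over `υ > 0`). -/
theorem dp_from_moments {Ω : Type*} (P Q : PMF Ω) (ε υ : ℝ) (hε : 0 < ε) (hυ : 0 < υ)
    (habs : ∀ o, Q o = 0 → P o = 0)
    (E : ℝ≥0∞)
    (hE : E = ∑' o, P o *
      ENNReal.ofReal (Real.exp (υ * Real.log ((P o).toReal / (Q o).toReal))))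
    (hfin : E ≠ ⊤) :
    ∀ O : Set Ω,
      P.toOuterMeasure O ≤ ENNReal.ofReal (Real.exp ε) * Q.toOuterMeasure O
        + ENNReal.ofReal (Real.exp (Real.log E.toReal - υ * ε)) :=
  dp_from_moments_general P Q ε υ hυ habs E hE hfin
end

section
/- Composability of moments: if a mechanism M consists of a sequence of adaptive mechanisms M₁,…,M_k where each M_i may depend on the outputs of M₁,…,M_{i−1}, then for every υ the log moment generating function satisfies β_M(υ) ≤ Σ_{i=1}^k β_{M_i}(υ). -/
open scoped ENNReal

private lemma snoc_castLE_eq {Ω : Type*} {n : ℕ} (ω : Fin n → Ω) (o : Ω) (i : Fin n) :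
    (fun j : Fin ((Fin.castSucc i : Fin (n+1)) : ℕ) =>
        (Fin.snoc (α := fun _ => Ω) ω o (Fin.castLE (Fin.castSucc i).isLt.le j) : Ω))
      = (fun j : Fin i.val => ω (Fin.castLE i.isLt.le j)) := by
  funext j
  show Fin.snoc (α := fun _ => Ω) ω o (Fin.castSucc (Fin.castLE i.isLt.le j)) = _
  exact Fin.snoc_castSucc (α := fun _ => Ω) o ω _

private lemma snoc_castLE_last {Ω : Type*} {n : ℕ} (ω : Fin n → Ω) (o : Ω) :
    (fun j : Fin ((Fin.last n : Fin (n+1)) : ℕ) =>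
        (Fin.snoc (α := fun _ => Ω) ω o (Fin.castLE (Fin.last n).isLt.le j) : Ω)) = ω := by
  funext j
  show Fin.snoc (α := fun _ => Ω) ω o (Fin.castSucc j) = _
  exact Fin.snoc_castSucc (α := fun _ => Ω) o ω _

/-- Composability of moments: for a sequence of `k` adaptive mechanisms `M i`, each
possibly depending on the outputs of the previous ones, the (exponentiated) log moment
generating function of the total privacy loss is bounded by the sum of the per-step
bounds `B i` on the conditional log moment generating functions (each bounding the
maximum over auxiliary inputs). -/
theorem moments_composability {Ω D : Type*} (k : ℕ)
    (M : (i : Fin k) → D → ((j : Fin i) → Ω) → PMF Ω)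
    (d d' : D) (υ : ℝ) (B : Fin k → ℝ)
    (hstep : ∀ (i : Fin k) (γ : (j : Fin i) → Ω),
      (∑' o : Ω, M i d γ o * ENNReal.ofReal (Real.exp (υ *
          Real.log ((M i d γ o).toReal / (M i d' γ o).toReal))))
        ≤ ENNReal.ofReal (Real.exp (B i))) :
    (∑' ω : Fin k → Ω,
        (∏ i, M i d (fun j => ω (Fin.castLE i.isLt.le j)) (ω i)) *
          ENNReal.ofReal (Real.exp (υ * ∑ i,
            Real.log ((M i d (fun j => ω (Fin.castLE i.isLt.le j)) (ω i)).toReal /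
              (M i d' (fun j => ω (Fin.castLE i.isLt.le j)) (ω i)).toReal))))
      ≤ ENNReal.ofReal (Real.exp (∑ i, B i)) := by
  induction k with
  | zero =>
    simp only [Finset.univ_eq_empty, Finset.prod_empty, Finset.sum_empty, mul_zero,
      Real.exp_zero, ENNReal.ofReal_one, one_mul, mul_one]
    rw [tsum_eq_single (default : Fin 0 → Ω) (fun b hb => absurd (Subsingleton.elim b default) hb)]
  | succ n ih =>
    set F : (Fin (n+1) → Ω) → ℝ≥0∞ := fun ω =>
      (∏ i, M i d (fun j => ω (Fin.castLE i.isLt.le j)) (ω i)) *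
        ENNReal.ofReal (Real.exp (υ * ∑ i,
          Real.log ((M i d (fun j => ω (Fin.castLE i.isLt.le j)) (ω i)).toReal /
            (M i d' (fun j => ω (Fin.castLE i.isLt.le j)) (ω i)).toReal))) with hF
    have hEquiv : (∑' ω : Fin (n+1) → Ω, F ω)
        = ∑' p : Ω × (Fin n → Ω), F (Fin.snocEquiv (fun _ => Ω) p) :=
      (Equiv.tsum_eq (Fin.snocEquiv (fun _ => Ω)) F).symm
    set P : (Fin n → Ω) → ℝ≥0∞ := fun ω' =>
      (∏ i, M (Fin.castSucc i) d (fun j => ω' (Fin.castLE i.isLt.le j)) (ω' i)) *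
        ENNReal.ofReal (Real.exp (υ * ∑ i,
          Real.log ((M (Fin.castSucc i) d (fun j => ω' (Fin.castLE i.isLt.le j)) (ω' i)).toReal /
            (M (Fin.castSucc i) d' (fun j => ω' (Fin.castLE i.isLt.le j)) (ω' i)).toReal))) with hP
    have key : ∀ (ω' : Fin n → Ω) (o : Ω),
        F (Fin.snocEquiv (fun _ => Ω) (o, ω')) =
          P ω' * (M (Fin.last n) d ω' o * ENNReal.ofReal (Real.exp (υ *
            Real.log ((M (Fin.last n) d ω' o).toReal / (M (Fin.last n) d' ω' o).toReal)))) := by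
      intro ω' o
      simp only [hF, hP, Fin.snocEquiv_apply, Fin.prod_univ_castSucc, Fin.sum_univ_castSucc,
        Fin.snoc_castSucc, Fin.snoc_last, snoc_castLE_eq, snoc_castLE_last,
        mul_add, Real.exp_add, ENNReal.ofReal_mul (Real.exp_nonneg _), div_eq_mul_inv]
      exact mul_mul_mul_comm _ _ _ _
    have h1 : ∀ ω' : Fin n → Ω, (∑' o : Ω, F (Fin.snocEquiv (fun _ => Ω) (o, ω')))
        ≤ P ω' * ENNReal.ofReal (Real.exp (B (Fin.last n))) := by
      intro ω'
      calc (∑' o : Ω, F (Fin.snocEquiv (fun _ => Ω) (o, ω')))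
          = P ω' * ∑' o : Ω, (M (Fin.last n) d ω' o * ENNReal.ofReal (Real.exp (υ *
              Real.log ((M (Fin.last n) d ω' o).toReal / (M (Fin.last n) d' ω' o).toReal)))) := by
            simp only [key]; rw [ENNReal.tsum_mul_left]
        _ ≤ P ω' * ENNReal.ofReal (Real.exp (B (Fin.last n))) :=
            mul_le_mul_right (hstep (Fin.last n) ω') _
    have hP' : (∑' ω' : Fin n → Ω, P ω') ≤ ENNReal.ofReal (Real.exp (∑ i, B (Fin.castSucc i))) :=
      ih (fun i => M (Fin.castSucc i)) (fun i => B (Fin.castSucc i))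
        (fun i γ => hstep (Fin.castSucc i) γ)
    calc (∑' ω : Fin (n+1) → Ω, F ω)
        = ∑' ω' : Fin n → Ω, ∑' o : Ω, F (Fin.snocEquiv (fun _ => Ω) (o, ω')) := by
          rw [hEquiv,
            ENNReal.tsum_prod (f := fun o ω' => F (Fin.snocEquiv (fun _ => Ω) (o, ω'))),
            ENNReal.tsum_comm]
      _ ≤ ∑' ω' : Fin n → Ω, P ω' * ENNReal.ofReal (Real.exp (B (Fin.last n))) :=
          ENNReal.tsum_le_tsum h1
      _ = (∑' ω' : Fin n → Ω, P ω') * ENNReal.ofReal (Real.exp (B (Fin.last n))) :=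
          ENNReal.tsum_mul_right
      _ ≤ ENNReal.ofReal (Real.exp (∑ i, B (Fin.castSucc i)))
            * ENNReal.ofReal (Real.exp (B (Fin.last n))) := mul_le_mul_left hP' _
      _ = ENNReal.ofReal (Real.exp (∑ i : Fin (n+1), B i)) := by
          rw [← ENNReal.ofReal_mul (Real.exp_nonneg _), ← Real.exp_add, Fin.sum_univ_castSucc]
end
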